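/- For every t ∈ (0,1) and every x ∈ ℝ^d, the map t ↦ v*(x, t) is differentiable and ∂_t v*(x, t) = −((1+t²)/(1−t²)²) x + (2t/(1−t²)²) m_t(x) + ((1+t²)/(1−t²)³) Cov_t(x) x − (t/(1−t²)³) (s_t(x) − q_t(x) m_t(x)). -/

import Mathlib

open MeasureTheory

/-- The Gaussian kernel `g_t(x, x₁) = exp(-‖x - t x₁‖² / (2(1-t²)))`. -/
noncomputable def gKer (d : ℕ) (t : ℝ) (x x₁ : EuclideanSpace ℝ (Fin d)) : ℝ :=
  Real.exp (-‖x - t • x₁‖ ^ 2 / (2 * (1 - t ^ 2)))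

/-- `φ_t(x) = ∫ g_t(x, x₁) dπ₁(x₁)`. -/
noncomputable def phiFn (d : ℕ) (π₁ : MeasureTheory.Measure (EuclideanSpace ℝ (Fin d))) (t : ℝ)
    (x : EuclideanSpace ℝ (Fin d)) : ℝ :=
  ∫ x₁, gKer d t x x₁ ∂π₁

/-- `m_t(x) = φ_t(x)⁻¹ ∫ x₁ g_t(x, x₁) dπ₁(x₁)`. -/
noncomputable def mFn (d : ℕ) (π₁ : MeasureTheory.Measure (EuclideanSpace ℝ (Fin d))) (t : ℝ)
    (x : EuclideanSpace ℝ (Fin d)) : EuclideanSpace ℝ (Fin d) :=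
  (phiFn d π₁ t x)⁻¹ • ∫ x₁, gKer d t x x₁ • x₁ ∂π₁

/-- The velocity field `v*(x, t) = (1/(1-t²)) m_t(x) - (t/(1-t²)) x`. -/
noncomputable def vStar (d : ℕ) (π₁ : MeasureTheory.Measure (EuclideanSpace ℝ (Fin d)))
    (x : EuclideanSpace ℝ (Fin d)) (t : ℝ) : EuclideanSpace ℝ (Fin d) :=
  (1 / (1 - t ^ 2)) • mFn d π₁ t x - (t / (1 - t ^ 2)) • x

/-- `M_t(x) = φ_t(x)⁻¹ ∫ x₁ x₁ᵀ g_t(x, x₁) dπ₁(x₁)` as a `d × d` matrix. -/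
noncomputable def MMat (d : ℕ) (π₁ : MeasureTheory.Measure (EuclideanSpace ℝ (Fin d))) (t : ℝ)
    (x : EuclideanSpace ℝ (Fin d)) : Matrix (Fin d) (Fin d) ℝ :=
  Matrix.of fun i j => (phiFn d π₁ t x)⁻¹ * ∫ x₁, gKer d t x x₁ * (x₁ i * x₁ j) ∂π₁

/-- The conditional covariance `Cov_t(x) = M_t(x) - m_t(x) m_t(x)ᵀ`. -/
noncomputable def covMat (d : ℕ) (π₁ : MeasureTheory.Measure (EuclideanSpace ℝ (Fin d))) (t : ℝ)
    (x : EuclideanSpace ℝ (Fin d)) : Matrix (Fin d) (Fin d) ℝ :=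
  MMat d π₁ t x - Matrix.of fun i j => mFn d π₁ t x i * mFn d π₁ t x j

/-- `s_t(x) = φ_t(x)⁻¹ ∫ x₁ ‖x₁‖² g_t(x, x₁) dπ₁(x₁)`. -/
noncomputable def sFn (d : ℕ) (π₁ : MeasureTheory.Measure (EuclideanSpace ℝ (Fin d))) (t : ℝ)
    (x : EuclideanSpace ℝ (Fin d)) : EuclideanSpace ℝ (Fin d) :=
  (phiFn d π₁ t x)⁻¹ • ∫ x₁, (‖x₁‖ ^ 2 * gKer d t x x₁) • x₁ ∂π₁

/-- `q_t(x) = φ_t(x)⁻¹ ∫ ‖x₁‖² g_t(x, x₁) dπ₁(x₁)`. -/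
noncomputable def qFn (d : ℕ) (π₁ : MeasureTheory.Measure (EuclideanSpace ℝ (Fin d))) (t : ℝ)
    (x : EuclideanSpace ℝ (Fin d)) : ℝ :=
  (phiFn d π₁ t x)⁻¹ * ∫ x₁, ‖x₁‖ ^ 2 * gKer d t x x₁ ∂π₁

/-!
Writing `∂ₜ g_t(x, x₁) = g_t(x, x₁) w_t(x, x₁)`, the log-derivative `w_t` is affine in `⟪x, x₁⟫`
and `‖x₁‖²`. Since `π₁` has compact support, one may differentiate under the integral sign, and
the derivative of a posterior mean `E_t[h] = φ_t⁻¹ ∫ h g_t dπ₁` is the posterior covariance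
`E_t[w_t h] - E_t[w_t] E_t[h]`. For `h = id` the `‖x‖²`-part of `w_t` cancels, the `⟪x, x₁⟫`-part
gives `Cov_t(x) x` and the `‖x₁‖²`-part gives `s_t(x) - q_t(x) m_t(x)`; the formula for `∂ₜ v*`
is then the product rule.
-/

open Set

noncomputable def gKerLogDeriv (d : ℕ) (t : ℝ) (x x₁ : EuclideanSpace ℝ (Fin d)) : ℝ :=
  ((1 + t ^ 2) * inner ℝ x x₁ - t * ‖x₁‖ ^ 2 - t * ‖x‖ ^ 2) / (1 - t ^ 2) ^ 2

lemma hasDerivAt_gKer {d : ℕ} {t : ℝ} (ht : 1 - t ^ 2 ≠ 0) (x x₁ : EuclideanSpace ℝ (Fin d)) :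
    HasDerivAt (fun s => gKer d s x x₁) (gKer d t x x₁ * gKerLogDeriv d t x x₁) t := by
  have hsq (s : ℝ) : ‖x - s • x₁‖ ^ 2 = ‖x‖ ^ 2 - 2 * s * inner ℝ x x₁ + s ^ 2 * ‖x₁‖ ^ 2 := by
    rw [norm_sub_sq_real, real_inner_smul_right, norm_smul, mul_pow, Real.norm_eq_abs, sq_abs]
    ring
  have hnum : HasDerivAt (fun s => -(‖x‖ ^ 2 - 2 * s * inner ℝ x x₁ + s ^ 2 * ‖x₁‖ ^ 2))
      (2 * inner ℝ x x₁ - 2 * t * ‖x₁‖ ^ 2) t :=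
    (((((hasDerivAt_id t).const_mul 2).mul_const (inner ℝ x x₁)).const_sub
      (‖x‖ ^ 2)).add ((hasDerivAt_pow 2 t).mul_const (‖x₁‖ ^ 2))).neg.congr_deriv
      (by simp only [Nat.cast_ofNat, Nat.add_one_sub_one, pow_one]; ring)
  have hden : HasDerivAt (fun s : ℝ => 2 * (1 - s ^ 2)) (-4 * t) t :=
    (((hasDerivAt_pow 2 t).const_sub 1).const_mul 2).congr_deriv
      (by simp only [Nat.cast_ofNat, Nat.add_one_sub_one, pow_one]; ring)
  have hquot : HasDerivAt
      (fun s => -(‖x‖ ^ 2 - 2 * s * inner ℝ x x₁ + s ^ 2 * ‖x₁‖ ^ 2) / (2 * (1 - s ^ 2)))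
      (gKerLogDeriv d t x x₁) t :=
    (hnum.div hden (by simpa using ht)).congr_deriv
      (by simp only [gKerLogDeriv]; field_simp; ring)
  simp only [gKer, hsq]
  exact hquot.exp

lemma continuous_gKer (d : ℕ) (t : ℝ) (x : EuclideanSpace ℝ (Fin d)) :
    Continuous (gKer d t x) := by
  unfold gKer
  fun_prop

lemma continuous_gKerLogDeriv (d : ℕ) (t : ℝ) (x : EuclideanSpace ℝ (Fin d)) :
    Continuous (gKerLogDeriv d t x) := by
  unfold gKerLogDeriv
  fun_prop

lemma continuousOn_gKer_mul_gKerLogDeriv (d : ℕ) (x : EuclideanSpace ℝ (Fin d)) :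
    ContinuousOn
      (fun p : ℝ × EuclideanSpace ℝ (Fin d) => gKer d p.1 x p.2 * gKerLogDeriv d p.1 x p.2)
      {p | p.1 ^ 2 < 1} := by
  unfold gKer gKerLogDeriv
  fun_prop (disch := (rintro p hp; apply ne_of_gt; simp only [mem_ofPred_eq] at hp; nlinarith))

theorem Continuous.integrable_of_ae_mem_isCompact {X F : Type*} [TopologicalSpace X] [T2Space X]
    [MeasurableSpace X] [OpensMeasurableSpace X] [NormedAddCommGroup F] {μ : Measure X}
    [IsFiniteMeasure μ] {f : X → F} (hf : Continuous f) {K : Set X} (hK : IsCompact K)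
    (hμK : ∀ᵐ x ∂μ, x ∈ K) : Integrable f μ := by
  simpa only [IntegrableOn, Measure.restrict_eq_self_of_ae_mem hμK] using
    hf.continuousOn.integrableOn_compact (μ := μ) hK

lemma EuclideanSpace.isCompact_setOf_forall_apply_mem_Icc {ι : Type*} [Fintype ι] (a b : ι → ℝ) :
    IsCompact {y : EuclideanSpace ℝ ι | ∀ i, y i ∈ Icc (a i) (b i)} := by
  convert (EuclideanSpace.equiv ι ℝ).toHomeomorph.isCompact_preimage.2
    (isCompact_univ_pi fun i => isCompact_Icc (a := a i) (b := b i)) using 1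
  ext y
  simp only [Set.mem_preimage, Set.mem_univ_pi]
  rfl

/-- The mean of `h` under the posterior `π_t(dx₁ | x) ∝ g_t(x, x₁) π₁(dx₁)`. -/
noncomputable def posteriorMean {F : Type*} [NormedAddCommGroup F] [NormedSpace ℝ F] (d : ℕ)
    (μ : Measure (EuclideanSpace ℝ (Fin d))) (t : ℝ) (x : EuclideanSpace ℝ (Fin d))
    (h : EuclideanSpace ℝ (Fin d) → F) : F :=
  (phiFn d μ t x)⁻¹ • ∫ x₁, gKer d t x x₁ • h x₁ ∂μ

section CompactSupport

variable {d : ℕ} {μ : Measure (EuclideanSpace ℝ (Fin d))}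
  {K : Set (EuclideanSpace ℝ (Fin d))} {F : Type*} [NormedAddCommGroup F] [NormedSpace ℝ F]

lemma integrable_gKer_smul [IsFiniteMeasure μ] (hK : IsCompact K) (hμK : ∀ᵐ x₁ ∂μ, x₁ ∈ K)
    (t : ℝ) (x : EuclideanSpace ℝ (Fin d)) {h : EuclideanSpace ℝ (Fin d) → F}
    (hh : Continuous h) : Integrable (fun x₁ => gKer d t x x₁ • h x₁) μ :=
  ((continuous_gKer d t x).smul hh).integrable_of_ae_mem_isCompact hK hμK

lemma phiFn_pos [IsFiniteMeasure μ] [NeZero μ] (hK : IsCompact K) (hμK : ∀ᵐ x₁ ∂μ, x₁ ∈ K)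
    (t : ℝ) (x : EuclideanSpace ℝ (Fin d)) : 0 < phiFn d μ t x :=
  integral_exp_pos ((continuous_gKer d t x).integrable_of_ae_mem_isCompact hK hμK)

lemma hasDerivAt_integral_gKer_smul [IsFiniteMeasure μ] [CompleteSpace F] (hK : IsCompact K)
    (hμK : ∀ᵐ x₁ ∂μ, x₁ ∈ K) {h : EuclideanSpace ℝ (Fin d) → F} (hh : Continuous h)
    (x : EuclideanSpace ℝ (Fin d)) {t : ℝ} (ht : t ^ 2 < 1) :
    HasDerivAt (fun s => ∫ x₁, gKer d s x x₁ • h x₁ ∂μ)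
      (∫ x₁, (gKer d t x x₁ * gKerLogDeriv d t x x₁) • h x₁ ∂μ) t := by
  have hU : IsOpen {s : ℝ | s ^ 2 < 1} := isOpen_lt (continuous_pow 2) continuous_const
  obtain ⟨I, hI, htI, hIU⟩ := exists_compact_subset hU ht
  -- the derivative of the integrand is jointly continuous, hence bounded on `I × K`
  obtain ⟨C, hC⟩ := (hI.prod hK).exists_bound_of_continuousOn
    (((continuousOn_gKer_mul_gKerLogDeriv d x).mono fun p hp => hIU hp.1).smul
      (hh.comp continuous_snd).continuousOn)
  refine (hasDerivAt_integral_of_dominated_loc_of_deriv_le (bound := fun _ => C)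
    (mem_interior_iff_mem_nhds.mp htI)
    (.of_forall fun s => ((continuous_gKer d s x).smul hh).aestronglyMeasurable)
    (integrable_gKer_smul hK hμK t x hh)
    ((((continuous_gKer d t x).mul (continuous_gKerLogDeriv d t x)).smul hh).aestronglyMeasurable)
    (hμK.mono fun x₁ hx₁ s hs => hC (s, x₁) ⟨hs, hx₁⟩) (integrable_const C)
    (.of_forall fun x₁ s hs => ?_)).2
  have hs2 : s ^ 2 < 1 := hIU hs
  exact (hasDerivAt_gKer (by linarith) x x₁).smul_const (h x₁)

lemma posteriorMean_const_smul (t : ℝ) (x : EuclideanSpace ℝ (Fin d)) (r : ℝ)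
    (h : EuclideanSpace ℝ (Fin d) → F) :
    posteriorMean d μ t x (fun x₁ => r • h x₁) = r • posteriorMean d μ t x h := by
  simp only [posteriorMean, smul_comm _ r, integral_smul]

lemma posteriorMean_sub [IsFiniteMeasure μ] [CompleteSpace F] (hK : IsCompact K)
    (hμK : ∀ᵐ x₁ ∂μ, x₁ ∈ K) (t : ℝ) (x : EuclideanSpace ℝ (Fin d))
    {f g : EuclideanSpace ℝ (Fin d) → F} (hf : Continuous f) (hg : Continuous g) :
    posteriorMean d μ t x (fun x₁ => f x₁ - g x₁) =
      posteriorMean d μ t x f - posteriorMean d μ t x g := by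
  simp only [posteriorMean, smul_sub, integral_sub (integrable_gKer_smul hK hμK t x hf)
    (integrable_gKer_smul hK hμK t x hg)]

lemma posteriorMean_const [IsFiniteMeasure μ] [NeZero μ] [CompleteSpace F] (hK : IsCompact K)
    (hμK : ∀ᵐ x₁ ∂μ, x₁ ∈ K) (t : ℝ) (x : EuclideanSpace ℝ (Fin d)) (c : F) :
    posteriorMean d μ t x (fun _ => c) = c := by
  rw [posteriorMean, integral_smul_const, smul_smul, ← phiFn,
    inv_mul_cancel₀ (phiFn_pos hK hμK t x).ne', one_smul]

lemma ContinuousLinearMap.map_posteriorMean {G : Type*} [NormedAddCommGroup G] [NormedSpace ℝ G]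
    [IsFiniteMeasure μ] [CompleteSpace F] [CompleteSpace G] (L : F →L[ℝ] G) (hK : IsCompact K)
    (hμK : ∀ᵐ x₁ ∂μ, x₁ ∈ K) (t : ℝ) (x : EuclideanSpace ℝ (Fin d))
    {h : EuclideanSpace ℝ (Fin d) → F} (hh : Continuous h) :
    L (posteriorMean d μ t x h) = posteriorMean d μ t x (fun x₁ => L (h x₁)) := by
  simp only [posteriorMean, L.map_smul,
    ← L.integral_comp_comm (integrable_gKer_smul hK hμK t x hh)]

lemma hasDerivAt_posteriorMean [IsFiniteMeasure μ] [NeZero μ] [CompleteSpace F]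
    (hK : IsCompact K) (hμK : ∀ᵐ x₁ ∂μ, x₁ ∈ K) {h : EuclideanSpace ℝ (Fin d) → F}
    (hh : Continuous h) (x : EuclideanSpace ℝ (Fin d)) {t : ℝ} (ht : t ^ 2 < 1) :
    HasDerivAt (fun s => posteriorMean d μ s x h)
      (posteriorMean d μ t x (fun x₁ => gKerLogDeriv d t x x₁ • h x₁)
        - posteriorMean d μ t x (gKerLogDeriv d t x) • posteriorMean d μ t x h) t := by
  have hφ : HasDerivAt (fun s => phiFn d μ s x)
      (∫ x₁, gKer d t x x₁ * gKerLogDeriv d t x x₁ ∂μ) t := by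
    have := hasDerivAt_integral_gKer_smul (μ := μ) hK hμK (continuous_const (y := (1 : ℝ))) x ht
    simp only [smul_eq_mul, mul_one] at this
    exact this
  refine ((hφ.inv (phiFn_pos hK hμK t x).ne').smul
    (hasDerivAt_integral_gKer_smul hK hμK hh x ht)).congr_deriv ?_
  simp only [posteriorMean, smul_eq_mul, smul_smul, Pi.inv_apply]
  module

lemma posteriorMean_gKerLogDeriv_smul [IsFiniteMeasure μ] [CompleteSpace F] (hK : IsCompact K)
    (hμK : ∀ᵐ x₁ ∂μ, x₁ ∈ K) {h : EuclideanSpace ℝ (Fin d) → F} (hh : Continuous h) (t : ℝ)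
    (x : EuclideanSpace ℝ (Fin d)) :
    posteriorMean d μ t x (fun x₁ => gKerLogDeriv d t x x₁ • h x₁) =
      (1 / (1 - t ^ 2) ^ 2) •
        ((1 + t ^ 2) • posteriorMean d μ t x (fun x₁ => inner ℝ x x₁ • h x₁)
          - t • posteriorMean d μ t x (fun x₁ => ‖x₁‖ ^ 2 • h x₁)
          - (t * ‖x‖ ^ 2) • posteriorMean d μ t x h) := by
  have hw : (fun x₁ => gKerLogDeriv d t x x₁ • h x₁) = fun x₁ => (1 / (1 - t ^ 2) ^ 2) •
      ((1 + t ^ 2) • (inner ℝ x x₁ • h x₁) - t • (‖x₁‖ ^ 2 • h x₁) - (t * ‖x‖ ^ 2) • h x₁) := by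
    funext x₁
    rw [gKerLogDeriv]
    module
  rw [hw, posteriorMean_const_smul, posteriorMean_sub hK hμK t x (by fun_prop) (by fun_prop),
    posteriorMean_sub hK hμK t x (by fun_prop) (by fun_prop), posteriorMean_const_smul,
    posteriorMean_const_smul, posteriorMean_const_smul]

end CompactSupport

section Moments

variable {d : ℕ} {μ : Measure (EuclideanSpace ℝ (Fin d))} {t : ℝ} {x : EuclideanSpace ℝ (Fin d)}

lemma mFn_eq_posteriorMean : mFn d μ t x = posteriorMean d μ t x (fun x₁ => x₁) := rfl

lemma qFn_eq_posteriorMean : qFn d μ t x = posteriorMean d μ t x (fun x₁ => ‖x₁‖ ^ 2) := by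
  simp only [qFn, posteriorMean, smul_eq_mul, mul_comm]

lemma sFn_eq_posteriorMean : sFn d μ t x = posteriorMean d μ t x (fun x₁ => ‖x₁‖ ^ 2 • x₁) := by
  simp only [sFn, posteriorMean, smul_smul, mul_comm]

lemma MMat_apply_eq_posteriorMean (i j : Fin d) :
    MMat d μ t x i j = posteriorMean d μ t x (fun x₁ => x₁ i * x₁ j) := rfl

variable [IsFiniteMeasure μ] {K : Set (EuclideanSpace ℝ (Fin d))}

lemma posteriorMean_apply (hK : IsCompact K) (hμK : ∀ᵐ x₁ ∂μ, x₁ ∈ K)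
    {h : EuclideanSpace ℝ (Fin d) → EuclideanSpace ℝ (Fin d)} (hh : Continuous h) (i : Fin d) :
    posteriorMean d μ t x h i = posteriorMean d μ t x (fun x₁ => h x₁ i) :=
  (EuclideanSpace.proj i).map_posteriorMean hK hμK t x hh

lemma toEuclideanLin_MMat (hK : IsCompact K) (hμK : ∀ᵐ x₁ ∂μ, x₁ ∈ K)
    (y : EuclideanSpace ℝ (Fin d)) :
    Matrix.toEuclideanLin (MMat d μ t x) y =
      posteriorMean d μ t x (fun x₁ => inner ℝ y x₁ • x₁) := by
  ext i
  calc Matrix.toEuclideanLin (MMat d μ t x) y i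
      = ∑ j, posteriorMean d μ t x (fun x₁ => x₁ i • x₁) j * y j := by
        simp [Matrix.toEuclideanLin, Matrix.mulVec, dotProduct, MMat_apply_eq_posteriorMean,
          posteriorMean_apply hK hμK
            (show Continuous fun x₁ : EuclideanSpace ℝ (Fin d) => x₁ i • x₁ by fun_prop)]
    _ = inner ℝ y (posteriorMean d μ t x (fun x₁ => x₁ i • x₁)) := by
        simp [PiLp.inner_apply]
    _ = posteriorMean d μ t x (fun x₁ => inner ℝ y (x₁ i • x₁)) :=
        (innerSL ℝ y).map_posteriorMean hK hμK t x (by fun_prop)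
    _ = posteriorMean d μ t x (fun x₁ => inner ℝ y x₁ • x₁) i := by
        rw [posteriorMean_apply hK hμK (by fun_prop)]
        simp [inner_smul_right, mul_comm]

lemma toEuclideanLin_covMat (hK : IsCompact K) (hμK : ∀ᵐ x₁ ∂μ, x₁ ∈ K)
    (y : EuclideanSpace ℝ (Fin d)) :
    Matrix.toEuclideanLin (covMat d μ t x) y =
      posteriorMean d μ t x (fun x₁ => inner ℝ y x₁ • x₁)
        - inner ℝ y (mFn d μ t x) • mFn d μ t x := by
  rw [covMat, map_sub, LinearMap.sub_apply, toEuclideanLin_MMat hK hμK]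
  congr 1
  ext i
  simp only [Matrix.toEuclideanLin, Matrix.ofLp_toLpLin, Matrix.toLin'_apply, Matrix.mulVec,
    dotProduct, Matrix.of_apply, PiLp.inner_apply, RCLike.inner_apply, Real.ringHom_apply,
    PiLp.smul_apply, smul_eq_mul, Finset.sum_mul]
  exact Finset.sum_congr rfl fun _ _ => by ring

lemma posteriorMean_gKerLogDeriv [NeZero μ] (hK : IsCompact K) (hμK : ∀ᵐ x₁ ∂μ, x₁ ∈ K) :
    posteriorMean d μ t x (gKerLogDeriv d t x) = (1 / (1 - t ^ 2) ^ 2) *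
      ((1 + t ^ 2) * inner ℝ x (mFn d μ t x) - t * qFn d μ t x - t * ‖x‖ ^ 2) := by
  have h := posteriorMean_gKerLogDeriv_smul hK hμK (continuous_const (y := (1 : ℝ))) t x
  simp only [smul_eq_mul, mul_one] at h
  have hinner : inner ℝ x (mFn d μ t x) = posteriorMean d μ t x (fun x₁ => inner ℝ x x₁) :=
    (innerSL ℝ x).map_posteriorMean hK hμK t x continuous_id'
  rw [h, posteriorMean_const hK hμK, qFn_eq_posteriorMean, hinner, mul_one]

lemma hasDerivAt_mFn [NeZero μ] (hK : IsCompact K) (hμK : ∀ᵐ x₁ ∂μ, x₁ ∈ K) (ht : t ^ 2 < 1) :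
    HasDerivAt (fun s => mFn d μ s x)
      ((1 / (1 - t ^ 2) ^ 2) • ((1 + t ^ 2) • Matrix.toEuclideanLin (covMat d μ t x) x
        - t • (sFn d μ t x - qFn d μ t x • mFn d μ t x))) t := by
  have hm := hasDerivAt_posteriorMean hK hμK continuous_id' x ht
  rw [posteriorMean_gKerLogDeriv_smul hK hμK continuous_id', posteriorMean_gKerLogDeriv hK hμK]
    at hm
  refine hm.congr_deriv ?_
  rw [toEuclideanLin_covMat hK hμK, sFn_eq_posteriorMean, qFn_eq_posteriorMean,
    ← mFn_eq_posteriorMean]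
  module

end Moments

theorem time_derivative_velocity_general
    (d : ℕ)
    (π₁ : Measure (EuclideanSpace ℝ (Fin d))) [IsProbabilityMeasure π₁]
    (hsupp : ∀ᵐ x₁ ∂π₁, ∀ i, x₁ i ∈ Set.Icc (0 : ℝ) 1)
    (t : ℝ) (ht : t ∈ Set.Ioo (0 : ℝ) 1) (x : EuclideanSpace ℝ (Fin d)) :
    HasDerivAt (fun s => vStar d π₁ x s)
      ((-((1 + t ^ 2) / (1 - t ^ 2) ^ 2)) • x
        + (2 * t / (1 - t ^ 2) ^ 2) • mFn d π₁ t x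
        + ((1 + t ^ 2) / (1 - t ^ 2) ^ 3) • Matrix.toEuclideanLin (covMat d π₁ t x) x
        - (t / (1 - t ^ 2) ^ 3) • (sFn d π₁ t x - qFn d π₁ t x • mFn d π₁ t x)) t := by
  have hK := EuclideanSpace.isCompact_setOf_forall_apply_mem_Icc (ι := Fin d) 0 1
  have ht2 : t ^ 2 < 1 := by nlinarith [ht.1, ht.2]
  have hne : 1 - t ^ 2 ≠ 0 := by linarith
  have ha : HasDerivAt (fun s : ℝ => 1 / (1 - s ^ 2)) (2 * t / (1 - t ^ 2) ^ 2) t :=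
    ((hasDerivAt_const t 1).div ((hasDerivAt_pow 2 t).const_sub 1) hne).congr_deriv
      (by field_simp; ring)
  have hb : HasDerivAt (fun s : ℝ => s / (1 - s ^ 2)) ((1 + t ^ 2) / (1 - t ^ 2) ^ 2) t :=
    ((hasDerivAt_id t).div ((hasDerivAt_pow 2 t).const_sub 1) hne).congr_deriv
      (by simp only [id]; field_simp; ring)
  refine ((ha.smul (hasDerivAt_mFn hK hsupp ht2)).sub (hb.smul_const x)).congr_deriv ?_
  -- `module` cannot combine `(1 - t ^ 2)⁻¹` and `((1 - t ^ 2) ^ 2)⁻¹` unless `1 - t ^ 2` is an atom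
  generalize 1 - t ^ 2 = u
  module

/-- For every `t ∈ (0,1)` and every `x`, the map `t ↦ v*(x,t)` is differentiable, with
`∂ₜ v*(x,t) = -((1+t²)/(1-t²)²) x + (2t/(1-t²)²) m_t(x) + ((1+t²)/(1-t²)³) Cov_t(x) x
- (t/(1-t²)³)(s_t(x) - q_t(x) m_t(x))`. -/
theorem time_derivative_velocity
    (d : ℕ) (hd : 1 ≤ d)
    (π₁ : Measure (EuclideanSpace ℝ (Fin d))) [IsProbabilityMeasure π₁]
    (hsupp : ∀ᵐ x₁ ∂π₁, ∀ i, x₁ i ∈ Set.Icc (0 : ℝ) 1)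
    (t : ℝ) (ht : t ∈ Set.Ioo (0 : ℝ) 1) (x : EuclideanSpace ℝ (Fin d)) :
    HasDerivAt (fun s => vStar d π₁ x s)
      ((-((1 + t ^ 2) / (1 - t ^ 2) ^ 2)) • x
        + (2 * t / (1 - t ^ 2) ^ 2) • mFn d π₁ t x
        + ((1 + t ^ 2) / (1 - t ^ 2) ^ 3) • Matrix.toEuclideanLin (covMat d π₁ t x) x
        - (t / (1 - t ^ 2) ^ 3) • (sFn d π₁ t x - qFn d π₁ t x • mFn d π₁ t x)) t :=
  time_derivative_velocity_general d π₁ hsupp t ht x
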